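/- arXiv:2007.06724 — 3 statements merged into one kernel-verified Lean document; each statement's English description precedes it below -/
import Mathlib

section
/- Let U ⊆ ℂ be open, z₀ ∈ U, and let f : U \ {z₀} → ℂ be holomorphic and injective on U \ {z₀}, with |f(z)| → ∞ as z → z₀. Then f has a pole of order exactly one at z₀: the function z ↦ (z − z₀)·f(z) extends to a holomorphic function on a neighborhood of z₀ in U whose value at z₀ is nonzero. -/
/-!
Away from `z₀` the function `1 / f` is holomorphic and injective, and it tends to `0` at `z₀`, so
by Riemann's removable singularity theorem it extends to a holomorphic `h` with `h z₀ = 0` that is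
injective near `z₀`. If `h` vanished to order `n ≥ 2`, writing `h = (z - z₀)ⁿ g` with `g z₀ ≠ 0`
and taking an analytic `n`-th root `ψ` of `g` would give `h = φⁿ` for the local coordinate
`φ z = (z - z₀) ψ z`; as `φ` is open at `z₀`, it takes two values `ζ` and `ω ζ` with `ω` a
primitive `n`-th root of unity, at two distinct points where `h` then agrees. Hence
`h = (z - z₀) g` with `g z₀ ≠ 0`, and `(z - z₀) f z = 1 / g z` near `z₀`.
-/

open Filter Topology Set Function

theorem AnalyticAt.exists_pow_eq {g : ℂ → ℂ} {z₀ : ℂ} (hg : AnalyticAt ℂ g z₀) (hg0 : g z₀ ≠ 0)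
    {n : ℕ} (hn : n ≠ 0) : ∃ ψ : ℂ → ℂ, AnalyticAt ℂ ψ z₀ ∧ ∀ z, ψ z ^ n = g z := by
  refine ⟨fun z => g z₀ ^ (n⁻¹ : ℂ) * (g z / g z₀) ^ (n⁻¹ : ℂ), ?_, fun z => ?_⟩
  · refine analyticAt_const.mul ((hg.div analyticAt_const hg0).cpow analyticAt_const ?_)
    simp [div_self hg0]
  · rw [mul_pow, Complex.cpow_nat_inv_pow _ hn, Complex.cpow_nat_inv_pow _ hn,
      mul_div_cancel₀ _ hg0]

theorem not_injOn_pow_of_nhds_le_map {X : Type*} [TopologicalSpace X] {φ : X → ℂ} {x : X}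
    (hφ : 𝓝 0 ≤ map φ (𝓝 x)) {n : ℕ} (hn : 2 ≤ n) {s : Set X} (hs : s ∈ 𝓝 x) :
    ¬ InjOn (fun z => φ z ^ n) s := by
  intro hinj
  have hω := Complex.isPrimitiveRoot_exp n (by omega)
  set ω := Complex.exp (2 * Real.pi * Complex.I / n)
  have himage : φ '' s ∈ 𝓝 0 := hφ (image_mem_map hs)
  have hrot : Tendsto (ω * ·) (𝓝 (0 : ℂ)) (𝓝 0) := by
    simpa using (continuous_const_mul ω).tendsto 0
  have hboth : ∀ᶠ ζ in 𝓝[≠] 0, ζ ∈ φ '' s ∧ ω * ζ ∈ φ '' s :=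
    nhdsWithin_le_nhds (inter_mem himage (hrot himage))
  obtain ⟨ζ, ⟨⟨z₁, hz₁, rfl⟩, z₂, hz₂, hωz⟩, hζ⟩ := (hboth.and self_mem_nhdsWithin).exists
  have hpow : φ z₂ ^ n = φ z₁ ^ n := by rw [hωz, mul_pow, hω.pow_eq_one, one_mul]
  obtain rfl := hinj hz₂ hz₁ hpow
  exact hω.ne_one (by omega) (mul_right_cancel₀ hζ (by rw [one_mul, ← hωz]))

theorem AnalyticAt.not_injOn_sub_pow_mul {g : ℂ → ℂ} {z₀ : ℂ} (hg : AnalyticAt ℂ g z₀)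
    (hg0 : g z₀ ≠ 0) {n : ℕ} (hn : 2 ≤ n) {s : Set ℂ} (hs : s ∈ 𝓝 z₀) :
    ¬ InjOn (fun z => (z - z₀) ^ n * g z) s := by
  obtain ⟨ψ, hψ, hψpow⟩ := hg.exists_pow_eq hg0 (n := n) (by omega)
  have hψ0 : ψ z₀ ≠ 0 := fun h => hg0 (by rw [← hψpow, h, zero_pow (by omega)])
  have hφ : HasStrictDerivAt (fun z => (z - z₀) * ψ z) (ψ z₀) z₀ := by
    have hsub : HasStrictDerivAt (fun z => z - z₀) 1 z₀ := (hasStrictDerivAt_id z₀).sub_const z₀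
    simpa using hsub.fun_mul hψ.hasStrictDerivAt
  have hmap : map (fun z => (z - z₀) * ψ z) (𝓝 z₀) = 𝓝 0 := by
    simpa using hφ.map_nhds_eq hψ0
  convert not_injOn_pow_of_nhds_le_map hmap.ge hn hs using 2
  ext z
  rw [mul_pow, hψpow]

theorem AnalyticAt.exists_eventuallyEq_sub_mul_of_injOn {h : ℂ → ℂ} {z₀ : ℂ}
    (hh : AnalyticAt ℂ h z₀) (h0 : h z₀ = 0) {s : Set ℂ} (hs : s ∈ 𝓝 z₀) (hinj : InjOn h s) :
    ∃ g : ℂ → ℂ, AnalyticAt ℂ g z₀ ∧ g z₀ ≠ 0 ∧ ∀ᶠ z in 𝓝 z₀, h z = (z - z₀) * g z := by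
  have hnot : ¬ ∀ᶠ z in 𝓝 z₀, h z = 0 := by
    intro hzero
    have hnear : ∀ᶠ z in 𝓝[≠] z₀, h z = 0 ∧ z ∈ s := nhdsWithin_le_nhds (hzero.and hs)
    obtain ⟨z, ⟨hz0, hzs⟩, hne⟩ := (hnear.and self_mem_nhdsWithin).exists
    exact hne (hinj hzs (mem_of_mem_nhds hs) (hz0.trans h0.symm))
  obtain ⟨n, g, hg, hg0, heq⟩ := hh.exists_eventuallyEq_pow_smul_nonzero_iff.mpr hnot
  simp only [smul_eq_mul] at heq
  obtain rfl : n = 1 := by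
    rcases n with _ | _ | n
    · simpa [h0, hg0, eq_comm] using heq.self_of_nhds
    · rfl
    · exact absurd ((hinj.mono inter_subset_left).congr fun z hz => hz.2)
        (hg.not_injOn_sub_pow_mul hg0 (by omega) (inter_mem hs heq))
  exact ⟨g, hg, hg0, by simpa using heq⟩

theorem Set.InjOn.update_inv {α K : Type*} [DecidableEq α] [GroupWithZero K] {f : α → K}
    {s : Set α} {a : α} (hinj : InjOn f (s \ {a})) (hf : ∀ z ∈ s \ {a}, f z ≠ 0) :
    InjOn (update (fun z => (f z)⁻¹) a 0) s := by
  intro x hx y hy hxy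
  by_cases hxa : x = a <;> by_cases hya : y = a
  · rw [hxa, hya]
  · subst hxa
    rw [update_self, update_of_ne hya] at hxy
    exact absurd (inv_eq_zero.mp hxy.symm) (hf y ⟨hy, hya⟩)
  · subst hya
    rw [update_self, update_of_ne hxa] at hxy
    exact absurd (inv_eq_zero.mp hxy) (hf x ⟨hx, hxa⟩)
  · rw [update_of_ne hxa, update_of_ne hya] at hxy
    exact hinj ⟨hx, hxa⟩ ⟨hy, hya⟩ (inv_injective hxy)

theorem analyticAt_update_inv_of_tendsto_norm_atTop {f : ℂ → ℂ} {z₀ : ℂ}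
    (hd : ∀ᶠ z in 𝓝[≠] z₀, DifferentiableAt ℂ f z)
    (hpole : Tendsto (‖f ·‖) (𝓝[≠] z₀) atTop) :
    AnalyticAt ℂ (update (fun z => (f z)⁻¹) z₀ 0) z₀ := by
  refine Complex.analyticAt_of_differentiable_on_punctured_nhds_of_continuousAt ?_ ?_
  · filter_upwards [hd, hpole.eventually_ne_atTop 0, self_mem_nhdsWithin] with z hdz hfz hz
    refine (hdz.inv (norm_ne_zero_iff.mp hfz)).congr_of_eventuallyEq ?_
    filter_upwards [eventually_ne_nhds hz] with w hw
    exact update_of_ne hw _ _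
  · rw [continuousAt_update_same]
    exact tendsto_inv₀_cobounded.comp (tendsto_norm_atTop_iff_cobounded.mp hpole)

/-- An injective holomorphic function on a punctured neighborhood that blows up at the
puncture has a pole of order exactly one there: `(z - z₀) * f z` extends holomorphically
across `z₀` with nonzero value at `z₀`. -/
theorem injective_holomorphic_simple_pole
    (U : Set ℂ) (hU : IsOpen U) (z₀ : ℂ) (hz₀ : z₀ ∈ U) (f : ℂ → ℂ)
    (hf : DifferentiableOn ℂ f (U \ {z₀})) (hinj : Set.InjOn f (U \ {z₀}))
    (hpole : Filter.Tendsto (fun z => ‖f z‖) (𝓝[U \ {z₀}] z₀) Filter.atTop) :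
    ∃ g : ℂ → ℂ, ∃ V : Set ℂ, IsOpen V ∧ z₀ ∈ V ∧ V ⊆ U ∧
      DifferentiableOn ℂ g V ∧ g z₀ ≠ 0 ∧
      ∀ z ∈ V, z ≠ z₀ → g z = (z - z₀) * f z := by
  have hU₀ : U ∈ 𝓝 z₀ := hU.mem_nhds hz₀
  rw [sdiff_eq, nhdsWithin_inter_of_mem (mem_nhdsWithin_of_mem_nhds hU₀)] at hpole
  have hd : ∀ᶠ z in 𝓝[≠] z₀, DifferentiableAt ℂ f z := by
    filter_upwards [inter_mem_nhdsWithin _ hU₀] with z ⟨hz, hzU⟩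
    exact hf.differentiableAt ((hU.sdiff isClosed_singleton).mem_nhds ⟨hzU, hz⟩)
  have hnonzero : ∀ᶠ z in 𝓝 z₀, z ≠ z₀ → f z ≠ 0 :=
    eventually_nhdsWithin_iff.mp ((hpole.eventually_ne_atTop 0).mono fun z => norm_ne_zero_iff.mp)
  have hinjh : InjOn (update (fun z => (f z)⁻¹) z₀ 0) (U ∩ {z | z ≠ z₀ → f z ≠ 0}) :=
    (hinj.mono (sdiff_subset_sdiff_left inter_subset_left)).update_inv fun z hz => hz.1.2 hz.2
  obtain ⟨g, hg, hg0, heq⟩ := (analyticAt_update_inv_of_tendsto_norm_atTop hd hpole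
    ).exists_eventuallyEq_sub_mul_of_injOn (update_self _ _ _) (inter_mem hU₀ hnonzero) hinjh
  have hnear : ∀ᶠ z in 𝓝 z₀, z ∈ U ∧ AnalyticAt ℂ g z ∧ g z ≠ 0 ∧
      (z ≠ z₀ → (f z)⁻¹ = (z - z₀) * g z) := by
    filter_upwards [hU₀, hg.eventually_analyticAt, hg.continuousAt.eventually_ne hg0, heq]
      with z hzU hgz hgz0 hhz
    exact ⟨hzU, hgz, hgz0, fun hne => by rwa [update_of_ne hne] at hhz⟩
  obtain ⟨V, hV, hVopen, hz₀V⟩ := eventually_nhds_iff.mp hnear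
  refine ⟨fun z => (g z)⁻¹, V, hVopen, hz₀V, fun z hz => (hV z hz).1, fun z hz => ?_,
    inv_ne_zero hg0, fun z hz hne => ?_⟩
  · obtain ⟨-, hgz, hgz0, -⟩ := hV z hz
    exact (hgz.differentiableAt.inv hgz0).differentiableWithinAt
  · obtain ⟨-, -, -, hfz⟩ := hV z hz
    show (g z)⁻¹ = (z - z₀) * f z
    rw [← inv_inv (f z), hfz hne, mul_inv, ← mul_assoc, mul_inv_cancel₀ (sub_ne_zero.mpr hne),
      one_mul]
end

section
/- Let U ⊆ ℂ be open, let a, b ∈ U with a ≠ b, and let f be holomorphic and injective on U \ {a, b}. Then it cannot happen that both |f(z)| → ∞ as z → a and |f(z)| → ∞ as z → b. -/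
/-!
Near a pole `c`, `g = 1/f` (extended by `g c = 0`) is holomorphic by the removable singularity
theorem and not locally constant, so by the open mapping theorem it maps every punctured
neighbourhood of `c` onto a punctured neighbourhood of `0`; hence `f` maps it onto a
neighbourhood of `∞`. Two poles `a ≠ b` have disjoint punctured neighbourhoods whose images both
contain a neighbourhood of `∞`, so these images meet, contradicting injectivity.
-/

open Filter Topology Bornology

theorem AnalyticAt.nhdsNE_le_map_nhdsNE {E : Type*} [NormedAddCommGroup E] [NormedSpace ℂ E]
    {g : E → ℂ} {z₀ : E} (hg : AnalyticAt ℂ g z₀) (hne : ¬∀ᶠ z in 𝓝 z₀, g z = g z₀) :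
    𝓝[≠] (g z₀) ≤ map g (𝓝[≠] z₀) := by
  refine le_map fun V hV => ?_
  have hopen := hg.eventually_constant_or_nhds_le_map_nhds.resolve_left hne
  rw [← insert_mem_nhds_iff, ← Set.image_insert_eq]
  exact hopen (image_mem_map (insert_mem_nhds_iff.2 hV))

open scoped Pointwise in
theorem cobounded_le_map_nhdsNE_of_tendsto_cobounded {f : ℂ → ℂ} {c : ℂ}
    (hd : ∀ᶠ z in 𝓝[≠] c, DifferentiableAt ℂ f z) (hf : Tendsto f (𝓝[≠] c) (cobounded ℂ)) :
    cobounded ℂ ≤ map f (𝓝[≠] c) := by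
  set g := Function.update (fun z => (f z)⁻¹) c 0
  have hgc : g c = 0 := Function.update_self ..
  have hgf (z : ℂ) (hz : z ≠ c) : g z = (f z)⁻¹ := Function.update_of_ne hz ..
  have hg_eq : g =ᶠ[𝓝[≠] c] fun z => (f z)⁻¹ := eventually_nhdsWithin_of_forall hgf
  have hg_tendsto : Tendsto g (𝓝[≠] c) (𝓝[≠] 0) :=
    (tendsto_inv₀_cobounded'.comp hf).congr' hg_eq.symm
  have hg_ne : ∀ᶠ z in 𝓝[≠] c, g z ≠ 0 := hg_tendsto self_mem_nhdsWithin
  have hg_analytic : AnalyticAt ℂ g c := by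
    refine Complex.analyticAt_of_differentiable_on_punctured_nhds_of_continuousAt ?_ ?_
    · filter_upwards [hd, hg_ne, self_mem_nhdsWithin] with z hdz hgz (hzc : z ≠ c)
      have hfz : f z ≠ 0 := by simpa [hgf z hzc] using hgz
      refine (hdz.inv hfz).congr_of_eventuallyEq ?_
      filter_upwards [isOpen_compl_singleton.mem_nhds hzc] with w hw using hgf w hw
    · rw [← continuousWithinAt_compl_self, ContinuousWithinAt, hgc]
      exact hg_tendsto.mono_right nhdsWithin_le_nhds
  have hg_nonconst : ¬∀ᶠ z in 𝓝 c, g z = g c := fun h => by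
    obtain ⟨z, hz, hz'⟩ := ((h.filter_mono nhdsWithin_le_nhds).and hg_ne).exists
    exact hz' (hz.trans hgc)
  calc cobounded ℂ = (𝓝[≠] (g c))⁻¹ := by rw [hgc, inv_nhdsNE_zero]
    _ ≤ (map g (𝓝[≠] c))⁻¹ := Filter.inv_le_inv (hg_analytic.nhdsNE_le_map_nhdsNE hg_nonconst)
    _ = map f (𝓝[≠] c) := by
      rw [← Filter.map_inv, map_map]
      exact map_congr (hg_eq.mono fun z hz => by simp [hz])

theorem nhdsWithin_diff_pair_left {X : Type*} [TopologicalSpace X] [T1Space X] {U : Set X}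
    {a b : X} (hU : U ∈ 𝓝 a) (hab : a ≠ b) : 𝓝[U \ {a, b}] a = 𝓝[≠] a := by
  rw [nhdsWithin_restrict' {a}ᶜ (inter_mem hU (compl_singleton_mem_nhds hab))]
  congr 1
  ext z
  simp only [Set.mem_sdiff, Set.mem_insert_iff, Set.mem_singleton_iff, Set.mem_inter_iff,
    Set.mem_compl_iff]
  tauto

/-- An injective holomorphic function on an open set minus two points cannot blow up
at both punctures: it has at most one pole. -/
theorem injective_holomorphic_at_most_one_pole
    (U : Set ℂ) (hU : IsOpen U) (a b : ℂ) (ha : a ∈ U) (hb : b ∈ U) (hab : a ≠ b)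
    (f : ℂ → ℂ) (hf : DifferentiableOn ℂ f (U \ {a, b}))
    (hinj : Set.InjOn f (U \ {a, b})) :
    ¬ (Filter.Tendsto (fun z => ‖f z‖) (𝓝[U \ {a, b}] a) Filter.atTop ∧
        Filter.Tendsto (fun z => ‖f z‖) (𝓝[U \ {a, b}] b) Filter.atTop) := by
  rintro ⟨hta, htb⟩
  have hS : IsOpen (U \ {a, b}) := hU.sdiff (Set.toFinite _).isClosed
  have hpole (c : ℂ) (hc : 𝓝[U \ {a, b}] c = 𝓝[≠] c)
      (ht : Tendsto (fun z => ‖f z‖) (𝓝[U \ {a, b}] c) atTop) :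
      cobounded ℂ ≤ map f (𝓝[U \ {a, b}] c) := by
    have hd : ∀ᶠ z in 𝓝[U \ {a, b}] c, DifferentiableAt ℂ f z :=
      eventually_mem_nhdsWithin.mono fun z hz => hf.differentiableAt (hS.mem_nhds hz)
    rw [hc] at ht hd ⊢
    exact cobounded_le_map_nhdsNE_of_tendsto_cobounded hd (tendsto_norm_atTop_iff_cobounded.1 ht)
  have hpole_a := hpole a (nhdsWithin_diff_pair_left (hU.mem_nhds ha) hab) hta
  have hpole_b := hpole b
    (Set.pair_comm a b ▸ nhdsWithin_diff_pair_left (hU.mem_nhds hb) hab.symm) htb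
  have hdisj : Disjoint (𝓝[U \ {a, b}] a) (𝓝[U \ {a, b}] b) :=
    (disjoint_nhds_nhds.2 hab).mono nhdsWithin_le_nhds nhdsWithin_le_nhds
  have hbot : cobounded ℂ = ⊥ := le_bot_iff.1 <|
    calc cobounded ℂ ≤ map f (𝓝[U \ {a, b}] a) ⊓ map f (𝓝[U \ {a, b}] b) :=
          le_inf hpole_a hpole_b
      _ = ⊥ := by
        rw [← map_inf' self_mem_nhdsWithin self_mem_nhdsWithin hinj, hdisj.eq_bot, map_bot]
  exact NeBot.ne inferInstance hbot
end

section
/- Let S ⊆ ℂ be a finite set and let f : ℂ \ S → ℂ \ S be a holomorphic bijection of ℂ \ S onto itself. Then f is the restriction of a fractional linear transformation: there exist a, b, c, d ∈ ℂ with a·d − b·c ≠ 0 such that for every z ∈ ℂ \ S one has c·z + d ≠ 0 and f(z) = (a·z + b)/(c·z + d). -/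
/-!
An injective holomorphic map has no essential singularities: near an isolated singularity it
omits the open image of a small disc elsewhere, so by Riemann's theorem `1 / (f - v)` extends, and
`f` has a limit or a pole. Thus `f` has a removable singularity or a pole at each point of `S` and
at `∞`. Near a pole `f` takes every large value, so injectivity allows at most one pole, and a
pole of an injective map is simple because an injective holomorphic map has nonvanishing
derivative. Without any pole, `f` would extend to an entire function with a limit at `∞`, hence
constant. With the pole at `∞`, the entire extension satisfies `F z / z → a ≠ 0`, so its
difference quotient at `0` is constant by Liouville's theorem and `F` is affine. A pole at
`p ∈ S` is moved to `∞` by `w ↦ p + w⁻¹`.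
-/

open Filter Topology Set Bornology Metric Function

theorem nhdsNE_le_map_nhdsNE {X Y : Type*} [TopologicalSpace X] [TopologicalSpace Y]
    {f : X → Y} {x : X} (h : 𝓝 (f x) ≤ map f (𝓝 x)) :
    𝓝[≠] (f x) ≤ map f (𝓝[≠] x) := by
  intro N hN
  rw [← insert_mem_nhds_iff]
  refine h (mem_map.2 (mem_of_superset (insert_mem_nhds_iff.2 hN) ?_))
  rintro y (rfl | hy)
  exacts [mem_insert _ _, mem_insert_of_mem _ hy]

theorem not_injOn_of_le_map_of_disjoint {α β : Type*} {f : α → β} {s : Set α}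
    {l₁ l₂ : Filter α} {l : Filter β} [l.NeBot] (hl : Disjoint l₁ l₂) (hs₁ : s ∈ l₁)
    (hs₂ : s ∈ l₂) (h₁ : l ≤ map f l₁) (h₂ : l ≤ map f l₂) : ¬ InjOn f s := by
  intro hinj
  obtain ⟨A, hA, B, hB, hAB⟩ := Filter.disjoint_iff.1 hl
  obtain ⟨-, ⟨a, ha, rfl⟩, b, hb, hba⟩ := Filter.nonempty_of_mem
    (inter_mem (h₁ (image_mem_map (inter_mem hA hs₁)))
      (h₂ (image_mem_map (inter_mem hB hs₂))))
  exact hAB.ne_of_mem ha.1 hb.1 (hinj hb.2 ha.2 hba).symm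

theorem not_eventually_eq_of_injOn {X Y : Type*} [TopologicalSpace X] {f : X → Y} {U : Set X}
    {x : X} [(𝓝[≠] x).NeBot] (hU : U ∈ 𝓝 x) (hinj : InjOn f U) :
    ¬ ∀ᶠ z in 𝓝 x, f z = f x := fun hconst ↦ by
  obtain ⟨z, ⟨hfz, hzU⟩, hz⟩ :=
    (((hconst.and hU).filter_mono (nhdsWithin_le_nhds (s := {x}ᶜ))).and
      self_mem_nhdsWithin).exists
  exact hz (hinj hzU (mem_of_mem_nhds hU) hfz)

theorem continuousAt_of_leftInvOn_of_nhds_le_map {X Y : Type*} [TopologicalSpace X]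
    [TopologicalSpace Y] {f : X → Y} {g : Y → X} {V : Set X} {x : X} (hV : V ∈ 𝓝 x)
    (hgf : LeftInvOn g f V) (h : 𝓝 (f x) ≤ map f (𝓝 x)) : ContinuousAt g (f x) := by
  rw [ContinuousAt, hgf (mem_of_mem_nhds hV)]
  refine (tendsto_map'_iff.2 ?_).mono_left h
  exact tendsto_id.congr' (eventually_of_mem hV fun w hw ↦ (hgf hw).symm)

theorem Set.Finite.compl_mem_nhdsNE {X : Type*} [TopologicalSpace X] [T1Space X] {S : Set X}
    (hS : S.Finite) (x : X) : Sᶜ ∈ 𝓝[≠] x := by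
  simpa using mem_codiscrete.1 hS.compl_mem_codiscrete x

namespace Complex

variable {f : ℂ → ℂ} {U : Set ℂ} {z₀ : ℂ}

theorem nhds_le_map_nhds_of_injOn (hf : AnalyticAt ℂ f z₀) (hU : U ∈ 𝓝 z₀)
    (hinj : InjOn f U) : 𝓝 (f z₀) ≤ map f (𝓝 z₀) :=
  hf.eventually_constant_or_nhds_le_map_nhds.resolve_left (not_eventually_eq_of_injOn hU hinj)

theorem eventually_deriv_ne_zero_of_injOn (hf : AnalyticAt ℂ f z₀) (hU : U ∈ 𝓝 z₀)
    (hinj : InjOn f U) : ∀ᶠ z in 𝓝[≠] z₀, deriv f z ≠ 0 := by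
  refine hf.deriv.eventually_eq_zero_or_eventually_ne_zero.resolve_left fun hzero ↦
    not_eventually_eq_of_injOn hU hinj ?_
  obtain ⟨r, hr, hball⟩ := Metric.mem_nhds_iff.1 (hzero.and hf.eventually_analyticAt)
  filter_upwards [ball_mem_nhds z₀ hr] with z hz
  exact isOpen_ball.is_const_of_deriv_eq_zero (convex_ball z₀ r).isPreconnected
    (fun w hw ↦ (hball hw).2.differentiableAt.differentiableWithinAt) (fun w hw ↦ (hball hw).1)
    hz (mem_ball_self hr)

theorem differentiableAt_invFunOn_of_injOn {V : Set ℂ} (hV : IsOpen V)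
    (hf : ∀ z ∈ V, AnalyticAt ℂ f z) (hinj : InjOn f V)
    (hf' : ∀ z ∈ V, z ≠ z₀ → deriv f z ≠ 0) (hz₀ : z₀ ∈ V) :
    DifferentiableAt ℂ (invFunOn f V) (f z₀) := by
  have hgf : LeftInvOn (invFunOn f V) f V := fun z hz ↦ hinj.leftInvOn_invFunOn hz
  have hopen : ∀ z ∈ V, 𝓝 (f z) ≤ map f (𝓝 z) := fun z hz ↦
    nhds_le_map_nhds_of_injOn (hf z hz) (hV.mem_nhds hz) hinj
  have himage : ∀ z ∈ V, f '' V ∈ 𝓝 (f z) := fun z hz ↦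
    hopen z hz (image_mem_map (hV.mem_nhds hz))
  have hcont : ∀ z ∈ V, ContinuousAt (invFunOn f V) (f z) := fun z hz ↦
    continuousAt_of_leftInvOn_of_nhds_le_map (hV.mem_nhds hz) hgf (hopen z hz)
  refine (analyticAt_of_differentiable_on_punctured_nhds_of_continuousAt ?_
    (hcont z₀ hz₀)).differentiableAt
  filter_upwards [nhdsWithin_le_nhds (himage z₀ hz₀), self_mem_nhdsWithin]
  rintro - ⟨z, hz, rfl⟩ hne
  refine (HasDerivAt.of_local_left_inverse (f := f) (hcont z hz) ?_
    (hf' z hz fun h ↦ hne (h ▸ rfl)) ?_).differentiableAt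
  · rw [hgf hz]
    exact (hf z hz).differentiableAt.hasDerivAt
  · filter_upwards [himage z hz]
    rintro - ⟨y, hy, rfl⟩
    rw [hgf hy]

-- Otherwise the local inverse `g` would be differentiable at `f z₀` with `g ∘ f = id`
-- near `z₀`, and the chain rule would give `1 = g' (f z₀) * 0`.
theorem deriv_ne_zero_of_injOn (hf : AnalyticAt ℂ f z₀) (hU : U ∈ 𝓝 z₀)
    (hinj : InjOn f U) : deriv f z₀ ≠ 0 := by
  intro h0
  obtain ⟨V, hVsub, hVo, hz₀V⟩ := _root_.mem_nhds_iff.1 <| (hf.eventually_analyticAt.and <|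
    eventually_nhdsWithin_iff.1 (eventually_deriv_ne_zero_of_injOn hf hU hinj)).and hU
  have hinjV : InjOn f V := hinj.mono fun z hz ↦ (hVsub hz).2
  set g := invFunOn f V
  have hg : DifferentiableAt ℂ g (f z₀) := differentiableAt_invFunOn_of_injOn hVo
    (fun z hz ↦ (hVsub hz).1.1) hinjV (fun z hz ↦ (hVsub hz).1.2) hz₀V
  have hid : HasDerivAt id (deriv g (f z₀) * 0) z₀ :=
    (hg.hasDerivAt.comp z₀ (h0 ▸ hf.differentiableAt.hasDerivAt)).congr_of_eventuallyEq
      (eventually_of_mem (hVo.mem_nhds hz₀V) fun z hz ↦ (hinjV.leftInvOn_invFunOn hz).symm)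
  simpa using (hasDerivAt_id z₀).unique hid

variable {s : ℂ}

theorem tendsto_nhds_or_tendsto_cobounded_of_not_mapClusterPt {v : ℂ}
    (hd : ∀ᶠ z in 𝓝[≠] s, DifferentiableAt ℂ f z) (hv : ¬ MapClusterPt v (𝓝[≠] s) f) :
    (∃ L, Tendsto f (𝓝[≠] s) (𝓝 L)) ∨ Tendsto f (𝓝[≠] s) (cobounded ℂ) := by
  obtain ⟨N, hN, hfN⟩ : ∃ N ∈ 𝓝 v, ∀ᶠ z in 𝓝[≠] s, f z ∉ N := by
    simpa [mapClusterPt_iff_frequently] using hv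
  obtain ⟨ρ, hρ, hball⟩ := Metric.mem_nhds_iff.1 hN
  have hfar : ∀ᶠ z in 𝓝[≠] s, ρ ≤ ‖f z - v‖ := hfN.mono fun z hz ↦ by
    simpa [dist_eq_norm] using mt (@hball (f z)) hz
  have hne : ∀ᶠ z in 𝓝[≠] s, f z - v ≠ 0 := hfar.mono fun z hz h ↦ by
    rw [h, norm_zero] at hz
    exact hz.not_gt hρ
  -- `1 / (f - v)` is bounded near `s`, so it has a limit there.
  set h := fun z ↦ (f z - v)⁻¹
  have hhd : ∀ᶠ z in 𝓝[≠] s, DifferentiableAt ℂ h z :=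
    (hd.and hne).mono fun z hz ↦ (hz.1.sub_const v).inv hz.2
  have hbdd : IsBoundedUnder (· ≤ ·) (𝓝[≠] s) fun z ↦ ‖h z - h s‖ := by
    refine ⟨ρ⁻¹ + ‖h s‖, eventually_map.2 (hfar.mono fun z hz ↦ ?_)⟩
    refine (norm_sub_le _ _).trans (add_le_add_left ?_ _)
    rw [norm_inv]
    exact inv_anti₀ hρ hz
  have hlim := tendsto_limUnder_of_differentiable_on_punctured_nhds_of_bounded_under hhd hbdd
  have hfh : ∀ z, f z = v + (h z)⁻¹ := fun z ↦ by simp [h]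
  by_cases hL : limUnder (𝓝[≠] s) h = 0
  · right
    have h0 : Tendsto h (𝓝[≠] s) (𝓝[≠] 0) :=
      tendsto_nhdsWithin_iff.2 ⟨hL ▸ hlim, hne.mono fun z hz ↦ inv_ne_zero hz⟩
    exact ((tendsto_const_add_cobounded v).comp (tendsto_inv₀_nhdsNE_zero.comp h0)).congr
      fun z ↦ (hfh z).symm
  · left
    exact ⟨_, (tendsto_const_nhds.add (hlim.inv₀ hL)).congr fun z ↦ (hfh z).symm⟩

-- Near `s`, `f` omits the image of the small ball `ball z₁ (r / 4)`, which is a neighbourhood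
-- of `f z₁` by the open mapping theorem.
theorem tendsto_nhds_or_tendsto_cobounded_of_injOn
    (hd : ∀ᶠ z in 𝓝[≠] s, DifferentiableAt ℂ f z) (hU : U ∈ 𝓝[≠] s) (hinj : InjOn f U) :
    (∃ L, Tendsto f (𝓝[≠] s) (𝓝 L)) ∨ Tendsto f (𝓝[≠] s) (cobounded ℂ) := by
  obtain ⟨r, hr, hsub⟩ :=
    Metric.mem_nhdsWithin_iff.1 ((show ∀ᶠ z in 𝓝[≠] s, z ∈ U from hU).and hd)
  set z₁ := s + (r / 2 : ℝ)
  have hz₁ : dist z₁ s = r / 2 := by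
    simp [z₁, dist_eq_norm, abs_of_pos hr]
  have hW : ball z₁ (r / 4) ⊆ ball s r ∩ {s}ᶜ := fun z hz ↦ by
    have := dist_triangle z z₁ s
    refine ⟨mem_ball.2 (by linarith [mem_ball.1 hz]), fun h ↦ ?_⟩
    rw [mem_singleton_iff.1 h, mem_ball, dist_comm] at hz
    linarith
  have hWo : IsOpen (ball s r ∩ {s}ᶜ) := isOpen_ball.inter isOpen_compl_singleton
  have hinjW : InjOn f (ball s r ∩ {s}ᶜ) := hinj.mono fun z hz ↦ (hsub hz).1
  refine tendsto_nhds_or_tendsto_cobounded_of_not_mapClusterPt hd (v := f z₁) ?_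
  rw [mapClusterPt_iff_frequently]
  push Not
  have hz₁W : ball s r ∩ {s}ᶜ ∈ 𝓝 z₁ := hWo.mem_nhds (hW (mem_ball_self (by positivity)))
  refine ⟨f '' ball z₁ (r / 4), ?_, ?_⟩
  · have hf₁ : AnalyticAt ℂ f z₁ :=
      analyticAt_iff_eventually_differentiableAt.2 (eventually_of_mem hz₁W fun z hz ↦ (hsub hz).2)
    exact nhds_le_map_nhds_of_injOn hf₁ hz₁W hinjW (image_mem_map (ball_mem_nhds _ (by positivity)))
  · filter_upwards [inter_mem_nhdsWithin _ (ball_mem_nhds s (show 0 < r / 4 by positivity))]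
    rintro z ⟨hzs, hz⟩ ⟨w, hw, hwz⟩
    have hzw : z ≠ w :=
      (ball_disjoint_ball (by rw [dist_comm]; linarith)).ne_of_mem hz hw
    exact hzw (hinjW ⟨ball_subset_ball (by linarith) hz, hzs⟩ (hW hw) hwz.symm)

theorem analyticAt_update_inv_of_tendsto_cobounded
    (hd : ∀ᶠ z in 𝓝[≠] s, DifferentiableAt ℂ f z) (hf : Tendsto f (𝓝[≠] s) (cobounded ℂ)) :
    AnalyticAt ℂ (update f⁻¹ s 0) s := by
  have heq : update f⁻¹ s 0 =ᶠ[𝓝[≠] s] f⁻¹ :=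
    eventually_nhdsWithin_of_forall fun z hz ↦ update_of_ne hz _ _
  refine analyticAt_of_differentiable_on_punctured_nhds_of_continuousAt ?_ ?_
  · filter_upwards [hd, hf.eventually_ne_cobounded 0, self_mem_nhdsWithin] with z hdz hz hzs
    refine (hdz.inv hz).congr_of_eventuallyEq ?_
    filter_upwards [isOpen_compl_singleton.mem_nhds hzs] with w hw
    exact update_of_ne hw _ _
  · rw [← continuousWithinAt_compl_self, ContinuousWithinAt, update_self]
    exact (tendsto_inv₀_cobounded.comp hf).congr' heq.symm

theorem cobounded_le_map_of_tendsto_cobounded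
    (hd : ∀ᶠ z in 𝓝[≠] s, DifferentiableAt ℂ f z) (hf : Tendsto f (𝓝[≠] s) (cobounded ℂ)) :
    cobounded ℂ ≤ map f (𝓝[≠] s) := by
  set u := update f⁻¹ s 0
  have hu := analyticAt_update_inv_of_tendsto_cobounded hd hf
  have hnc : ¬ ∀ᶠ z in 𝓝 s, u z = u s := fun hconst ↦ by
    obtain ⟨z, hz, hfz, hzs⟩ := ((hconst.filter_mono nhdsWithin_le_nhds).and
      ((hf.eventually_ne_cobounded 0).and self_mem_nhdsWithin)).exists
    simp [u, update_of_ne hzs, hfz] at hz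
  -- `1 / f`, extended by `0` at `s`, is holomorphic and nonconstant, hence open at `s`.
  have hmap : 𝓝[≠] 0 ≤ map u (𝓝[≠] s) := by
    simpa [u] using
      nhdsNE_le_map_nhdsNE (hu.eventually_constant_or_nhds_le_map_nhds.resolve_left hnc)
  calc cobounded ℂ = map Inv.inv (map Inv.inv (cobounded ℂ)) := by simp
    _ ≤ map Inv.inv (map u (𝓝[≠] s)) := map_mono (tendsto_inv₀_cobounded'.trans hmap)
    _ = map f (𝓝[≠] s) := by
      rw [map_map]
      exact map_congr (eventually_nhdsWithin_of_forall fun z hz ↦ by simp [u, update_of_ne hz])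

theorem exists_tendsto_sub_mul_of_injOn (hd : ∀ᶠ z in 𝓝[≠] s, DifferentiableAt ℂ f z)
    (hU : U ∈ 𝓝[≠] s) (hinj : InjOn f U) (hf : Tendsto f (𝓝[≠] s) (cobounded ℂ)) :
    ∃ a ≠ 0, Tendsto (fun z ↦ (z - s) * f z) (𝓝[≠] s) (𝓝 a) := by
  set u := update f⁻¹ s 0
  have hu := analyticAt_update_inv_of_tendsto_cobounded hd hf
  set V := U ∩ {z | f z ≠ 0} ∩ {s}ᶜ
  have hV : V ∈ 𝓝[≠] s :=
    inter_mem (inter_mem hU (hf.eventually_ne_cobounded 0)) self_mem_nhdsWithin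
  have hu_eq : EqOn u f⁻¹ V := fun z hz ↦ update_of_ne hz.2 _ _
  have huinj : InjOn u (insert s V) := by
    refine (injOn_insert fun h ↦ h.2 rfl).2 ⟨?_, ?_⟩
    · intro z hz w hw hzw
      rw [hu_eq hz, hu_eq hw] at hzw
      exact hinj hz.1.1 hw.1.1 (inv_injective hzw)
    · rintro ⟨z, hz, hzs⟩
      rw [hu_eq hz] at hzs
      exact inv_ne_zero hz.1.2 (hzs.trans (update_self _ _ _))
  have hc := deriv_ne_zero_of_injOn hu (insert_mem_nhds_iff.2 hV) huinj
  refine ⟨(deriv u s)⁻¹, inv_ne_zero hc, ?_⟩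
  refine ((hasDerivAt_iff_tendsto_slope.1 hu.differentiableAt.hasDerivAt).inv₀ hc).congr' ?_
  filter_upwards [self_mem_nhdsWithin] with z hz
  simp [slope_def_field, update_of_ne hz]

theorem eq_mul_add_of_tendsto_inv_mul {F : ℂ → ℂ} {a : ℂ} (hF : Differentiable ℂ F)
    (ha : Tendsto (fun z ↦ z⁻¹ * F z) (cobounded ℂ) (𝓝 a)) (z : ℂ) : F z = a * z + F 0 := by
  have hK : Differentiable ℂ (dslope F 0) := by
    rw [← differentiableOn_univ, differentiableOn_dslope univ_mem]
    exact hF.differentiableOn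
  have hlim : Tendsto (dslope F 0) (cocompact ℂ) (𝓝 a) := by
    rw [← Metric.cobounded_eq_cocompact]
    have := ha.sub (tendsto_inv₀_cobounded.mul_const (F 0))
    rw [zero_mul, sub_zero] at this
    refine this.congr' ?_
    filter_upwards [eventually_ne_cobounded 0] with w hw
    rw [dslope_of_ne _ hw, slope_def_field, sub_zero, div_eq_inv_mul, mul_sub]
  have := sub_smul_dslope F 0 z
  rw [hK.apply_eq_of_tendsto_cocompact z hlim, smul_eq_mul, sub_zero] at this
  linear_combination -this

theorem exists_differentiable_eqOn_compl {S : Set ℂ} (hS : S.Finite)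
    (hf : DifferentiableOn ℂ f Sᶜ) (hlim : ∀ s ∈ S, ∃ L, Tendsto f (𝓝[≠] s) (𝓝 L)) :
    ∃ F : ℂ → ℂ, Differentiable ℂ F ∧ EqOn F f Sᶜ := by
  classical
  choose! L hL using hlim
  refine ⟨S.piecewise L f, fun z ↦ ?_, piecewise_eqOn_compl _ _ _⟩
  have hoff : ∀ z ∉ S, DifferentiableAt ℂ (S.piecewise L f) z := fun z hz ↦
    (hf.differentiableAt (hS.isClosed.isOpen_compl.mem_nhds hz)).congr_of_eventuallyEq
      (eventually_of_mem (hS.isClosed.isOpen_compl.mem_nhds hz) (piecewise_eqOn_compl _ _ _))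
  by_cases hz : z ∈ S
  · have hev : ∀ᶠ w in 𝓝[≠] z, w ∉ S := hS.compl_mem_nhdsNE z
    refine (analyticAt_of_differentiable_on_punctured_nhds_of_continuousAt (hev.mono hoff)
      ?_).differentiableAt
    rw [← continuousWithinAt_compl_self, ContinuousWithinAt, piecewise_eq_of_mem _ _ _ hz]
    exact (hL z hz).congr' (hev.mono fun w hw ↦ (piecewise_eq_of_notMem _ _ _ hw).symm)
  · exact hoff z hz

section ComplFinite

variable {S : Set ℂ}

theorem eventually_differentiableAt_nhdsNE (hS : S.Finite) (hf : DifferentiableOn ℂ f Sᶜ)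
    (z : ℂ) : ∀ᶠ w in 𝓝[≠] z, DifferentiableAt ℂ f w :=
  eventually_of_mem (hS.compl_mem_nhdsNE z) fun _ hw ↦
    hf.differentiableAt (hS.isClosed.isOpen_compl.mem_nhds hw)

theorem eventually_differentiableAt_comp_inv (hS : S.Finite) (hf : DifferentiableOn ℂ f Sᶜ) :
    ∀ᶠ w in 𝓝[≠] 0, DifferentiableAt ℂ (fun w ↦ f w⁻¹) w := by
  filter_upwards [tendsto_inv₀_nhdsNE_zero (isBounded_def.1 hS.isBounded), self_mem_nhdsWithin]
    with w hw hw0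
  exact (hf.differentiableAt (hS.isClosed.isOpen_compl.mem_nhds hw)).comp w
    (differentiableAt_inv hw0)

theorem tendsto_nhds_or_tendsto_cobounded_nhdsNE (hS : S.Finite)
    (hf : DifferentiableOn ℂ f Sᶜ) (hinj : InjOn f Sᶜ) (s : ℂ) :
    (∃ L, Tendsto f (𝓝[≠] s) (𝓝 L)) ∨ Tendsto f (𝓝[≠] s) (cobounded ℂ) :=
  tendsto_nhds_or_tendsto_cobounded_of_injOn (eventually_differentiableAt_nhdsNE hS hf s)
    (hS.compl_mem_nhdsNE s) hinj

theorem tendsto_nhds_or_tendsto_cobounded_cobounded (hS : S.Finite)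
    (hf : DifferentiableOn ℂ f Sᶜ) (hinj : InjOn f Sᶜ) :
    (∃ L, Tendsto f (cobounded ℂ) (𝓝 L)) ∨ Tendsto f (cobounded ℂ) (cobounded ℂ) := by
  rcases tendsto_nhds_or_tendsto_cobounded_of_injOn (eventually_differentiableAt_comp_inv hS hf)
    (tendsto_inv₀_nhdsNE_zero (isBounded_def.1 hS.isBounded))
    (hinj.comp inv_injective.injOn (mapsTo_preimage _ _)) with ⟨L, hL⟩ | hinf
  · exact .inl ⟨L, (hL.comp tendsto_inv₀_cobounded').congr fun z ↦ by simp⟩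
  · exact .inr ((hinf.comp tendsto_inv₀_cobounded').congr fun z ↦ by simp)

theorem exists_eq_mul_add_of_tendsto_cobounded (hS : S.Finite) (hf : DifferentiableOn ℂ f Sᶜ)
    (hinj : InjOn f Sᶜ) (hinf : Tendsto f (cobounded ℂ) (cobounded ℂ)) :
    ∃ a b : ℂ, a ≠ 0 ∧ ∀ z ∈ Sᶜ, f z = a * z + b := by
  have hSc : Sᶜ ∈ cobounded ℂ := isBounded_def.1 hS.isBounded
  have hd₀ := eventually_differentiableAt_comp_inv hS hf
  have hinf₀ : Tendsto (fun w ↦ f w⁻¹) (𝓝[≠] 0) (cobounded ℂ) :=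
    hinf.comp tendsto_inv₀_nhdsNE_zero
  have hmap : cobounded ℂ ≤ map f (cobounded ℂ) :=
    (cobounded_le_map_of_tendsto_cobounded hd₀ hinf₀).trans
      (by rw [← Function.comp_def, ← map_map]; exact map_mono tendsto_inv₀_nhdsNE_zero)
  -- Since `f` takes every large value near `∞`, injectivity rules out poles in `S`.
  have hrem : ∀ s ∈ S, ∃ L, Tendsto f (𝓝[≠] s) (𝓝 L) := fun s _ ↦
    (tendsto_nhds_or_tendsto_cobounded_nhdsNE hS hf hinj s).resolve_right fun hpole ↦
      not_injOn_of_le_map_of_disjoint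
        ((disjoint_nhds_cobounded s).mono_left nhdsWithin_le_nhds) (hS.compl_mem_nhdsNE s) hSc
        (cobounded_le_map_of_tendsto_cobounded (eventually_differentiableAt_nhdsNE hS hf s)
          hpole) hmap hinj
  obtain ⟨F, hFd, hFf⟩ := exists_differentiable_eqOn_compl hS hf hrem
  obtain ⟨a, ha, hlim⟩ := exists_tendsto_sub_mul_of_injOn hd₀ (tendsto_inv₀_nhdsNE_zero hSc)
    (hinj.comp inv_injective.injOn (mapsTo_preimage _ _)) hinf₀
  have hFa : Tendsto (fun z ↦ z⁻¹ * F z) (cobounded ℂ) (𝓝 a) := by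
    refine (hlim.comp tendsto_inv₀_cobounded').congr' ?_
    filter_upwards [hSc] with z hz
    simp [hFf hz]
  exact ⟨a, F 0, ha, fun z hz ↦ (hFf hz).symm.trans (eq_mul_add_of_tendsto_inv_mul hFd hFa z)⟩

theorem exists_mem_tendsto_cobounded_of_tendsto_nhds (hS : S.Finite)
    (hf : DifferentiableOn ℂ f Sᶜ) (hinj : InjOn f Sᶜ) {L : ℂ}
    (hL : Tendsto f (cobounded ℂ) (𝓝 L)) : ∃ p ∈ S, Tendsto f (𝓝[≠] p) (cobounded ℂ) := by
  by_contra! hno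
  obtain ⟨F, hFd, hFf⟩ := exists_differentiable_eqOn_compl hS hf fun s hs ↦
    (tendsto_nhds_or_tendsto_cobounded_nhdsNE hS hf hinj s).resolve_right (hno s hs)
  have hFL : Tendsto F (cocompact ℂ) (𝓝 L) := by
    rw [← Metric.cobounded_eq_cocompact]
    exact hL.congr' (eventually_of_mem (isBounded_def.1 hS.isBounded) fun z hz ↦ (hFf hz).symm)
  obtain ⟨x, hx, y, hy, hxy⟩ := hS.infinite_compl.nontrivial
  refine hxy (hinj hx hy ?_)
  rw [← hFf hx, ← hFf hy, hFd.apply_eq_of_tendsto_cocompact x hFL,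
    hFd.apply_eq_of_tendsto_cocompact y hFL]

theorem exists_mobius_of_tendsto_cobounded_nhdsNE (hS : S.Finite)
    (hf : DifferentiableOn ℂ f Sᶜ) (hinj : InjOn f Sᶜ) {p : ℂ} (hpS : p ∈ S)
    (hp : Tendsto f (𝓝[≠] p) (cobounded ℂ)) :
    ∃ a b c d : ℂ, a * d - b * c ≠ 0 ∧
      ∀ z ∈ Sᶜ, c * z + d ≠ 0 ∧ f z = (a * z + b) / (c * z + d) := by
  -- `w ↦ f (p + w⁻¹)` has its pole at `∞`.
  set T := insert 0 ((fun s ↦ (s - p)⁻¹) '' S)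
  have hT : ∀ w ∈ Tᶜ, w ≠ 0 ∧ p + w⁻¹ ∈ Sᶜ := fun w hw ↦
    ⟨fun h ↦ hw (h ▸ mem_insert _ _), fun hS' ↦ hw (mem_insert_of_mem _ ⟨_, hS', by simp⟩)⟩
  have hmove : Tendsto (fun w ↦ p + w⁻¹) (cobounded ℂ) (𝓝[≠] p) := by
    refine tendsto_nhdsWithin_iff.2 ⟨?_, ?_⟩
    · simpa using (tendsto_const_nhds (x := p)).add (tendsto_inv₀_cobounded (α := ℂ))
    · filter_upwards [eventually_ne_cobounded 0] with w hw
      simpa using hw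
  obtain ⟨a, b, ha, hab⟩ := exists_eq_mul_add_of_tendsto_cobounded (f := fun w ↦ f (p + w⁻¹))
    ((hS.image _).insert 0)
    (fun w hw ↦ ((hf.differentiableAt (hS.isClosed.isOpen_compl.mem_nhds (hT w hw).2)).comp w
      ((differentiableAt_inv (hT w hw).1).const_add p)).differentiableWithinAt)
    (fun w hw w' hw' h ↦ inv_injective (add_left_cancel (hinj (hT w hw).2 (hT w' hw').2 h)))
    (hp.comp hmove)
  refine ⟨b, a - b * p, 1, -p, by ring_nf; exact neg_ne_zero.2 ha, fun z hz ↦ ?_⟩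
  have hzp : z - p ≠ 0 := sub_ne_zero.2 fun h ↦ hz (h ▸ hpS)
  have hzT : (z - p)⁻¹ ∈ Tᶜ := by
    rintro (h | ⟨s, hs, hsz⟩)
    · exact inv_ne_zero hzp h
    · rw [inv_inj, sub_left_inj] at hsz
      exact hz (hsz ▸ hs)
  have hfz := hab _ hzT
  simp only [inv_inv, add_sub_cancel] at hfz
  rw [one_mul, ← sub_eq_add_neg, hfz]
  refine ⟨hzp, ?_⟩
  field_simp
  ring

end ComplFinite

end Complex

/-- A holomorphic bijection of `ℂ \ S` onto itself, for `S` finite, is the restriction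
of a fractional linear (Möbius) transformation. -/
theorem holomorphic_bijection_compl_finite_is_mobius
    (S : Set ℂ) (hS : S.Finite) (f : ℂ → ℂ)
    (hf : DifferentiableOn ℂ f Sᶜ) (hbij : Set.BijOn f Sᶜ Sᶜ) :
    ∃ a b c d : ℂ, a * d - b * c ≠ 0 ∧
      ∀ z ∈ Sᶜ, c * z + d ≠ 0 ∧ f z = (a * z + b) / (c * z + d) := by
  have hinj := hbij.injOn
  rcases Complex.tendsto_nhds_or_tendsto_cobounded_cobounded hS hf hinj with ⟨L, hL⟩ | hinf
  · obtain ⟨p, hpS, hp⟩ := Complex.exists_mem_tendsto_cobounded_of_tendsto_nhds hS hf hinj hL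
    exact Complex.exists_mobius_of_tendsto_cobounded_nhdsNE hS hf hinj hpS hp
  · obtain ⟨a, b, ha, hab⟩ := Complex.exists_eq_mul_add_of_tendsto_cobounded hS hf hinj hinf
    exact ⟨a, b, 0, 1, by simpa using ha, fun z hz ↦ ⟨by simp, by simp [hab z hz]⟩⟩
end
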